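/- The map sending (p1, p0) ∈ (0,1)^2 to (p1/p0, p0·p1/((1 − p0)·(1 − p1))) is a bijection from (0,1)^2 onto (0,∞) × (0,∞). -/

import Mathlib

/-!
Writing `odds p = p / (1 - p)`, the odds product is `odds p0 * odds p1`. Along a ray
`p1 = r * p0` of fixed relative risk both factors increase strictly with `p0`, which gives
injectivity. Conversely, for given `r, o > 0` the equation `odds p0 * odds (r * p0) = o` is a
quadratic in `p0`, whose root `2 o / (o (1 + r) + √(o² (1 - r)² + 4 r o))` lies in the required
range because the discriminant exceeds `(o (1 - r))²`.
-/

open Set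

noncomputable section

def odds (p : ℝ) : ℝ := p / (1 - p)

theorem mul_div_one_sub_mul_one_sub (a b : ℝ) : a * b / ((1 - a) * (1 - b)) = odds a * odds b :=
  mul_div_mul_comm a b _ _

theorem odds_div {a b : ℝ} (hb : b ≠ 0) : odds (a / b) = a / (b - a) := by
  rw [odds, one_sub_div hb, div_div_div_cancel_right₀ hb]

theorem odds_pos {p : ℝ} (hp : p ∈ Ioo (0 : ℝ) 1) : 0 < odds p :=
  div_pos hp.1 (sub_pos.2 hp.2)

theorem odds_strictMonoOn : StrictMonoOn odds (Iio 1) := by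
  intro a ha b hb hab
  rw [odds, odds, div_lt_div_iff₀ (sub_pos.2 ha) (sub_pos.2 hb)]
  linarith

theorem odds_mul_odds_lt_of_div_eq {p1 p0 q1 q0 : ℝ}
    (hp : (p1, p0) ∈ Ioo (0 : ℝ) 1 ×ˢ Ioo (0 : ℝ) 1) (hq : (q1, q0) ∈ Ioo (0 : ℝ) 1 ×ˢ Ioo (0 : ℝ) 1)
    (hratio : p1 / p0 = q1 / q0) (hlt : p0 < q0) :
    odds p0 * odds p1 < odds q0 * odds q1 := by
  obtain ⟨⟨hp1, -⟩, hp0, -⟩ := hp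
  obtain ⟨⟨-, hq1⟩, -, hq0⟩ := hq
  have h1 : p1 < q1 := by
    calc p1 = p1 / p0 * p0 := (div_mul_cancel₀ p1 hp0.ne').symm
      _ < p1 / p0 * q0 := mul_lt_mul_of_pos_left hlt (div_pos hp1 hp0)
      _ = q1 := by rw [hratio, div_mul_cancel₀ q1 (hp0.trans hlt).ne']
  exact mul_lt_mul'' (odds_strictMonoOn (hlt.trans hq0) hq0 hlt)
    (odds_strictMonoOn (h1.trans hq1) hq1 h1) (odds_pos ⟨hp0, hlt.trans hq0⟩).le
    (odds_pos ⟨hp1, h1.trans hq1⟩).le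

theorem exists_div_eq_odds_mul_odds_eq {r o : ℝ} (hr : 0 < r) (ho : 0 < o) :
    ∃ p ∈ Ioo (0 : ℝ) 1 ×ˢ Ioo (0 : ℝ) 1, p.1 / p.2 = r ∧ odds p.2 * odds p.1 = o := by
  set s := √(o ^ 2 * (1 - r) ^ 2 + 4 * r * o)
  have hs2 : s ^ 2 = o ^ 2 * (1 - r) ^ 2 + 4 * r * o := Real.sq_sqrt (by positivity)
  obtain ⟨hs₁, hs₂⟩ : -s < o * (1 - r) ∧ o * (1 - r) < s :=
    abs_lt.1 <| abs_lt_of_sq_lt_sq (by nlinarith [mul_pos hr ho]) (Real.sqrt_nonneg _)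
  set d := o * (1 + r) + s
  have hd : 0 < d := by nlinarith
  have hd₀ : 0 < d - 2 * o := by linarith
  have hd₁ : 0 < d - 2 * r * o := by linarith
  refine ⟨(2 * r * o / d, 2 * o / d), ⟨⟨by positivity, ?_⟩, by positivity, ?_⟩, ?_, ?_⟩
  · rw [div_lt_one hd]; linarith
  · rw [div_lt_one hd]; linarith
  · field_simp
  · rw [odds_div hd.ne', odds_div hd.ne', div_mul_div_comm, div_eq_iff (by positivity)]
    linear_combination (-o) * hs2

/-- The map `(p1, p0) ↦ (p1 / p0, p0·p1 / ((1-p0)·(1-p1)))` is a bijection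
from `(0,1)²` onto `(0,∞) × (0,∞)`. -/
theorem stmt_11 :
    Set.BijOn
      (fun q : ℝ × ℝ => ((q.1 / q.2, q.2 * q.1 / ((1 - q.2) * (1 - q.1))) : ℝ × ℝ))
      (Set.Ioo (0 : ℝ) 1 ×ˢ Set.Ioo (0 : ℝ) 1)
      (Set.Ioi (0 : ℝ) ×ˢ Set.Ioi (0 : ℝ)) := by
  simp_rw [mul_div_one_sub_mul_one_sub]
  refine ⟨?_, ?_, ?_⟩
  · rintro ⟨p1, p0⟩ ⟨hp1, hp0⟩
    exact ⟨div_pos hp1.1 hp0.1, mul_pos (odds_pos hp0) (odds_pos hp1)⟩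
  · rintro ⟨p1, p0⟩ hp ⟨q1, q0⟩ hq heq
    obtain ⟨hratio, hodds⟩ := Prod.mk.inj heq
    obtain rfl : p0 = q0 := by
      rcases lt_trichotomy p0 q0 with hlt | heq0 | hgt
      · exact absurd hodds (odds_mul_odds_lt_of_div_eq hp hq hratio hlt).ne
      · exact heq0
      · exact absurd hodds (odds_mul_odds_lt_of_div_eq hq hp hratio.symm hgt).ne'
    rw [div_left_inj' hp.2.1.ne'] at hratio
    exact Prod.ext hratio rfl
  · rintro ⟨r, o⟩ ⟨hr, ho⟩
    obtain ⟨p, hp, hratio, hodds⟩ := exists_div_eq_odds_mul_odds_eq hr ho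
    exact ⟨p, hp, Prod.ext hratio hodds⟩
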